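/- Define f(p) = ln(2 + 4^p) + (p−1)·ln(2·3^{p/(p−1)} + 1) and r(p) = f(p)/p for p ∈ (1,2]. Then r(p) ≤ lim_{p→1⁺} r(p) = ln 18 for all p ∈ (1, 1.7]. -/

import Mathlib

open Filter Topology

/-- `f(p) = ln(2 + 4^p) + (p−1)·ln(2·3^{p/(p−1)} + 1)`. -/
noncomputable def f (p : ℝ) : ℝ :=
  Real.log (2 + (4 : ℝ) ^ p)
    + (p - 1) * Real.log (2 * (3 : ℝ) ^ (p / (p - 1)) + 1)

/-- `r(p) = f(p)/p`. -/
noncomputable def r (p : ℝ) : ℝ := f p / p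

/-!
Pulling `3 ^ (p/(p-1))` out of the second logarithm gives
`f p = log (2 + 4^p) + p log 3 + (p - 1) log (2 + 3^(-p/(p-1)))`, and the last logarithm lies
between `log 2` and `log 2 + 3^(-p/(p-1)) / 2`. The lower bound already squeezes `r` to `log 18`
as `p → 1⁺`. For the upper bound, `p ↦ log (2 + 4^p)` is convex (a softplus of an affine
function), so on `[1, 1.7]` it stays below its chord, and a numerical check at `p = 1.7` shows
that the chord leaves enough room for the tiny tail `(p - 1) 3^(-p/(p-1)) / 2`.
-/

open Real Set

lemma hasDerivAt_log_one_add_exp (x : ℝ) :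
    HasDerivAt (fun x => log (1 + exp x)) (exp x / (1 + exp x)) x :=
  ((hasDerivAt_exp x).const_add 1).log (by positivity)

lemma convexOn_log_one_add_exp : ConvexOn ℝ univ (fun x => log (1 + exp x)) := by
  refine Monotone.convexOn_univ_of_deriv
    (fun x => (hasDerivAt_log_one_add_exp x).differentiableAt) fun x y hxy => ?_
  simp only [(hasDerivAt_log_one_add_exp _).deriv]
  rw [div_le_div_iff₀ (by positivity) (by positivity)]
  nlinarith [exp_le_exp.2 hxy]

lemma convexOn_log_add_rpow {a c : ℝ} (ha : 0 < a) (hc : 0 < c) :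
    ConvexOn ℝ univ (fun x : ℝ => log (a + c ^ x)) := by
  -- `log (a + c ^ x) = log a + log (1 + exp (x * log c - log a))`
  have h := (convexOn_log_one_add_exp.comp_affineMap
    (AffineMap.lineMap (-log a) (log c - log a) : ℝ →ᵃ[ℝ] ℝ)).add_const (log a)
  rw [preimage_univ] at h
  refine h.congr fun x _ => ?_
  simp only [Pi.add_apply, Function.comp_apply, AffineMap.lineMap_apply_ring']
  rw [← log_mul (by positivity) ha.ne', rpow_def_of_pos hc]
  congr 1
  rw [exp_add, exp_neg, exp_log ha]
  field_simp
  ring_nf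

lemma rpow_div_natCast_pow {a : ℝ} (ha : 0 ≤ a) (m : ℕ) {n : ℕ} (hn : n ≠ 0) :
    (a ^ ((m : ℝ) / n)) ^ n = a ^ m := by
  rw [← rpow_mul_natCast ha, div_mul_cancel₀ _ (Nat.cast_ne_zero.2 hn), rpow_natCast]

lemma le_rpow_natCast_div {a b : ℝ} {m n : ℕ} (ha : 0 ≤ a) (hn : n ≠ 0) (h : b ^ n ≤ a ^ m) :
    b ≤ a ^ ((m : ℝ) / n) :=
  le_of_pow_le_pow_left₀ hn (by positivity) (by rwa [rpow_div_natCast_pow ha m hn])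

lemma rpow_natCast_div_le {a b : ℝ} {m n : ℕ} (ha : 0 ≤ a) (hb : 0 ≤ b) (hn : n ≠ 0)
    (h : a ^ m ≤ b ^ n) : a ^ ((m : ℝ) / n) ≤ b :=
  le_of_pow_le_pow_left₀ hn hb (by rwa [rpow_div_natCast_pow ha m hn])

lemma two_point_one_five_le_three_rpow : (2.15 : ℝ) ≤ 3 ^ (0.7 : ℝ) := by
  rw [show (0.7 : ℝ) = (7 : ℕ) / (10 : ℕ) by norm_num]
  exact le_rpow_natCast_div (by norm_num) (by norm_num) (by norm_num)

lemma four_rpow_one_point_seven_le : (4 : ℝ) ^ (1.7 : ℝ) ≤ 10.56 := by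
  rw [show (1.7 : ℝ) = (17 : ℕ) / (10 : ℕ) by norm_num]
  exact rpow_natCast_div_le (by norm_num) (by norm_num) (by norm_num) (by norm_num)

lemma three_rpow_neg_seventeen_sevenths_le : (3 : ℝ) ^ (-(17 / 7) : ℝ) ≤ 0.07 := by
  have h : (100 / 7 : ℝ) ≤ 3 ^ (((17 : ℕ) : ℝ) / (7 : ℕ)) :=
    le_rpow_natCast_div (by norm_num) (by norm_num) (by norm_num)
  rw [rpow_neg (by norm_num)]
  calc ((3 : ℝ) ^ (17 / 7 : ℝ))⁻¹ ≤ (100 / 7)⁻¹ := inv_anti₀ (by norm_num) (by exact_mod_cast h)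
    _ = 0.07 := by norm_num

lemma f_eq_of_one_lt {p : ℝ} (hp : 1 < p) :
    f p = log (2 + 4 ^ p) + p * log 3 + (p - 1) * log (2 + 3 ^ (-(p / (p - 1)))) := by
  have hp1 : p - 1 ≠ 0 := sub_ne_zero.2 hp.ne'
  have h3 : (0 : ℝ) < 3 ^ (p / (p - 1)) := by positivity
  have hsplit :
      2 * (3 : ℝ) ^ (p / (p - 1)) + 1 = 3 ^ (p / (p - 1)) * (2 + 3 ^ (-(p / (p - 1)))) := by
    rw [rpow_neg zero_le_three]
    field_simp
  rw [f, hsplit, log_mul h3.ne' (by positivity), log_rpow three_pos, mul_add, ← mul_assoc,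
    mul_div_cancel₀ _ hp1]
  ring

lemma log_two_add_four_rpow_one_point_seven_le :
    log (2 + 4 ^ (1.7 : ℝ)) ≤ log 6 + 0.7 * (log 3 - 0.035) := by
  have hY : 2 + (4 : ℝ) ^ (1.7 : ℝ) ≤ 12.56 := by linarith [four_rpow_one_point_seven_le]
  have hU : 12.9 ≤ 6 * (3 : ℝ) ^ (0.7 : ℝ) := by linarith [two_point_one_five_le_three_rpow]
  set Y : ℝ := 2 + 4 ^ (1.7 : ℝ)
  set U : ℝ := 6 * 3 ^ (0.7 : ℝ)
  have hYpos : 0 < Y := by positivity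
  have hUpos : 0 < U := by positivity
  have hlogU : log U = log 6 + 0.7 * log 3 := by
    rw [log_mul (by norm_num) (by positivity), log_rpow three_pos]
  have hlog : log Y - log U ≤ Y / U - 1 := by
    rw [← log_div hYpos.ne' hUpos.ne']
    exact log_le_sub_one_of_pos (by positivity)
  have hratio : Y / U ≤ 12.56 / 12.9 := div_le_div₀ (by norm_num) hY (by norm_num) hU
  linarith

-- The slack `0.035 ≥ 3^(-17/7) / 2` absorbs the tail term of `f`.
lemma log_two_add_four_rpow_le {p : ℝ} (hp : 1 < p) (hp' : p ≤ 1.7) :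
    log (2 + 4 ^ p) ≤ log 6 + (p - 1) * (log 3 - 0.035) := by
  have hsecant := (convexOn_log_add_rpow two_pos four_pos).secant_mono (a := 1) (mem_univ _)
    (mem_univ p) (mem_univ 1.7) hp.ne' (by norm_num) hp'
  have hend : (log (2 + 4 ^ (1.7 : ℝ)) - log 6) / (1.7 - 1) ≤ log 3 - 0.035 := by
    rw [div_le_iff₀ (by norm_num)]
    linarith [log_two_add_four_rpow_one_point_seven_le]
  rw [rpow_one, show (2 : ℝ) + 4 = 6 by norm_num, div_le_iff₀ (sub_pos.2 hp)] at hsecant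
  linarith [mul_le_mul_of_nonneg_right hend (sub_pos.2 hp).le]

lemma log_two_add_three_rpow_neg_le {p : ℝ} (hp : 1 < p) (hp' : p ≤ 1.7) :
    log (2 + 3 ^ (-(p / (p - 1)))) ≤ log 2 + 0.035 := by
  have hq : 17 / 7 ≤ p / (p - 1) := by rw [le_div_iff₀ (sub_pos.2 hp)]; linarith
  have ht : (3 : ℝ) ^ (-(p / (p - 1))) ≤ 0.07 :=
    (rpow_le_rpow_of_exponent_le (by norm_num) (neg_le_neg hq)).trans three_rpow_neg_seventeen_sevenths_le
  have hlog := log_le_sub_one_of_pos (x := (2 + 3 ^ (-(p / (p - 1)))) / 2) (by positivity)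
  rw [log_div (by positivity) two_ne_zero] at hlog
  linarith

lemma log_six : log 6 = log 2 + log 3 := by
  rw [← log_mul two_ne_zero three_ne_zero]; norm_num

lemma log_eighteen : log 18 = log 6 + log 3 := by
  rw [← log_mul (by norm_num) three_ne_zero]; norm_num

lemma f_le_mul_log_eighteen {p : ℝ} (hp : 1 < p) (hp' : p ≤ 1.7) : f p ≤ p * log 18 := by
  have h4 := log_two_add_four_rpow_le hp hp'
  have h3 := mul_le_mul_of_nonneg_left (log_two_add_three_rpow_neg_le hp hp') (sub_pos.2 hp).le
  rw [f_eq_of_one_lt hp, log_eighteen]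
  linear_combination h4 + h3 + (1 - p) * log_six

lemma le_f_of_one_lt {p : ℝ} (hp : 1 < p) :
    log (2 + 4 ^ p) + p * log 3 + (p - 1) * log 2 ≤ f p := by
  rw [f_eq_of_one_lt hp]
  gcongr
  linarith [rpow_pos_of_pos three_pos (-(p / (p - 1)))]

lemma r_le_log_eighteen_of_le {p : ℝ} (hp : 1 < p) (hp' : p ≤ 1.7) : r p ≤ log 18 := by
  rw [r, div_le_iff₀ (zero_lt_one.trans hp), mul_comm]
  exact f_le_mul_log_eighteen hp hp'

lemma tendsto_r_nhdsGT_one : Tendsto r (𝓝[>] 1) (𝓝 (log 18)) := by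
  set g : ℝ → ℝ := fun p => (log (2 + 4 ^ p) + p * log 3 + (p - 1) * log 2) / p
  have hg : Tendsto g (𝓝[>] 1) (𝓝 (log 18)) := by
    have hcont : ContinuousAt g 1 := by fun_prop (disch := norm_num)
    have : g 1 = log 18 := by norm_num [g, log_eighteen]
    exact this ▸ hcont.tendsto.mono_left nhdsWithin_le_nhds
  refine tendsto_of_tendsto_of_tendsto_of_le_of_le' hg tendsto_const_nhds ?_ ?_
  · filter_upwards [self_mem_nhdsWithin] with p hp
    exact div_le_div_of_nonneg_right (le_f_of_one_lt hp) (zero_lt_one.trans hp).le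
  · filter_upwards [Ioo_mem_nhdsGT (show (1 : ℝ) < 1.7 by norm_num)] with p hp
    exact r_le_log_eighteen_of_le hp.1 hp.2.le

/-- `r(p) ≤ lim_{p→1⁺} r(p) = ln 18` for all `p ∈ (1, 1.7]`. -/
theorem r_le_log_eighteen :
    Tendsto r (𝓝[>] (1 : ℝ)) (𝓝 (Real.log 18)) ∧
    ∀ p : ℝ, 1 < p → p ≤ 1.7 → r p ≤ Real.log 18 := by
  exact ⟨tendsto_r_nhdsGT_one, fun _ => r_le_log_eighteen_of_le⟩
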